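/- arXiv:math/0008216 — 3 statements merged into one kernel-verified Lean document; each statement's English description precedes it below -/
import Mathlib

section
/- Let τ be a norm on ℝ² that is invariant under reflection across both coordinate axes and across the diagonals (i.e. τ(x₁,x₂)=τ(|x₁|,|x₂|)=τ(|x₂|,|x₁|)). Then for every nonzero x ∈ ℝ², (1/√2)·τ(e₁) ≤ τ(x)/‖x‖ ≤ √2·τ(e₁), where e₁=(1,0) and ‖x‖ is the Euclidean norm. -/
/-- For a norm τ on ℝ² with axis and diagonal symmetry,
(1/√2)·τ(e₁) ≤ τ(x)/‖x‖ ≤ √2·τ(e₁) for all nonzero x, ‖·‖ the Euclidean norm. -/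
theorem norm_equiv_euclidean
    (τ : ℝ × ℝ → ℝ)
    (htri : ∀ a b : ℝ × ℝ, τ (a + b) ≤ τ a + τ b)
    (hsmul : ∀ (c : ℝ) (a : ℝ × ℝ), τ (c • a) = |c| * τ a)
    (hdef : ∀ a : ℝ × ℝ, τ a = 0 ↔ a = 0)
    (hsym : ∀ a : ℝ × ℝ, τ a = τ (|a.1|, |a.2|) ∧ τ a = τ (|a.2|, |a.1|))
    (x : ℝ × ℝ) (hx : x ≠ 0) :
    (1 / Real.sqrt 2) * τ (1, 0) ≤ τ x / Real.sqrt (x.1 ^ 2 + x.2 ^ 2) ∧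
      τ x / Real.sqrt (x.1 ^ 2 + x.2 ^ 2) ≤ Real.sqrt 2 * τ (1, 0) := by
  obtain ⟨a, b⟩ := x
  simp only [Prod.mk.injEq, ne_eq, Prod.mk_eq_zero, not_and_or] at hx ⊢
  set t := τ (1, 0) with ht
  set s := Real.sqrt 2 with hs
  set N := Real.sqrt (a ^ 2 + b ^ 2) with hNdef
  have hs0 : 0 < s := Real.sqrt_pos.mpr (by norm_num)
  have hs2 : s ^ 2 = 2 := Real.sq_sqrt (by norm_num)
  have hN2 : N ^ 2 = a ^ 2 + b ^ 2 := Real.sq_sqrt (by positivity)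
  have hN : 0 < N := by
    apply Real.sqrt_pos.mpr
    rcases hx with h | h
    · positivity
    · positivity
  -- τ(0,1) = t
  have he2 : τ (0, 1) = t := by
    have := (hsym ((1:ℝ), (0:ℝ))).2
    simpa using this.symm
  -- t ≥ 0
  have hτ0 : τ 0 = 0 := (hdef 0).mpr rfl
  have hneg : ∀ y : ℝ × ℝ, τ (-y) = τ y := by
    intro y
    have := hsmul (-1) y
    simpa using this
  have hnn : ∀ y : ℝ × ℝ, 0 ≤ τ y := by
    intro y
    have h1 := htri y (-y)
    simp [hτ0, hneg] at h1
    linarith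
  have ht0 : 0 ≤ t := hnn _
  -- upper bound : τ (a,b) ≤ (|a|+|b|) t
  have hupper : τ (a, b) ≤ (|a| + |b|) * t := by
    have hx1 : ((a, b) : ℝ × ℝ) = a • ((1:ℝ), (0:ℝ)) + b • ((0:ℝ), (1:ℝ)) := by
      simp [Prod.ext_iff]
    have h1 := htri (a • ((1:ℝ), (0:ℝ))) (b • ((0:ℝ), (1:ℝ)))
    rw [← hx1, hsmul, hsmul, he2] at h1
    linarith
  -- τ(a,-b) = τ(a,b) and τ(-a,b) = τ(a,b)
  have hflip1 : τ (a, -b) = τ (a, b) := by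
    have h1 := (hsym (a, -b)).1
    have h2 := (hsym (a, b)).1
    simp only [abs_neg] at h1
    rw [h1, ← h2]
  have hflip2 : τ (-a, b) = τ (a, b) := by
    have h1 := (hsym (-a, b)).1
    have h2 := (hsym (a, b)).1
    simp only [abs_neg] at h1
    rw [h1, ← h2]
  -- lower bounds
  have hlowa : |a| * t ≤ τ (a, b) := by
    have hx1 : ((2 * a) • ((1:ℝ), (0:ℝ)) : ℝ × ℝ) = (a, b) + (a, -b) := by
      simp [Prod.ext_iff]; ring
    have h1 := htri (a, b) (a, -b)
    rw [← hx1, hsmul, hflip1] at h1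
    rw [abs_mul] at h1
    simp only [abs_two] at h1
    linarith
  have hlowb : |b| * t ≤ τ (a, b) := by
    have hx1 : ((2 * b) • ((0:ℝ), (1:ℝ)) : ℝ × ℝ) = (a, b) + (-a, b) := by
      simp [Prod.ext_iff]; ring
    have h1 := htri (a, b) (-a, b)
    rw [← hx1, hsmul, hflip2, he2] at h1
    rw [abs_mul] at h1
    simp only [abs_two] at h1
    linarith
  -- algebraic facts about sqrt
  have hsN : s * N = Real.sqrt (2 * (a ^ 2 + b ^ 2)) := (Real.sqrt_mul (by norm_num) _).symm
  have habsle : |a| + |b| ≤ s * N := by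
    rw [hsN]
    rw [show |a| + |b| = Real.sqrt ((|a| + |b|) ^ 2) from
      (Real.sqrt_sq (by positivity)).symm]
    apply Real.sqrt_le_sqrt
    nlinarith [sq_nonneg (|a| - |b|), sq_abs a, sq_abs b]
  have hmaxge : N ≤ s * max |a| |b| := by
    have key : ∀ c : ℝ, a ^ 2 + b ^ 2 ≤ 2 * c ^ 2 → N ≤ s * |c| := by
      intro c hc
      have : s * |c| = Real.sqrt (2 * c ^ 2) := by
        rw [Real.sqrt_mul (by norm_num), Real.sqrt_sq_eq_abs]
      rw [this]
      exact Real.sqrt_le_sqrt hc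
    rcases le_total |a| |b| with h | h
    · rw [max_eq_right h, ← abs_abs b]
      exact key _ (by nlinarith [sq_abs a, sq_abs b, pow_le_pow_left₀ (abs_nonneg a) h 2])
    · rw [max_eq_left h, ← abs_abs a]
      exact key _ (by nlinarith [sq_abs a, sq_abs b, pow_le_pow_left₀ (abs_nonneg b) h 2])
  constructor
  · rw [le_div_iff₀ hN]
    have hmaxle : max |a| |b| * t ≤ τ (a, b) := by
      rcases le_total |a| |b| with h | h
      · rw [max_eq_right h]; exact hlowb
      · rw [max_eq_left h]; exact hlowa
    have : (1 / s) * t * N ≤ max |a| |b| * t := by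
      rw [div_mul_eq_mul_div, div_mul_eq_mul_div, div_le_iff₀ hs0]
      calc 1 * t * N = N * t := by ring
        _ ≤ (s * max |a| |b|) * t := by
            exact mul_le_mul_of_nonneg_right hmaxge ht0
        _ = max |a| |b| * t * s := by ring
    linarith
  · rw [div_le_iff₀ hN]
    calc τ (a, b) ≤ (|a| + |b|) * t := hupper
      _ ≤ (s * N) * t := mul_le_mul_of_nonneg_right habsle ht0
      _ = s * t * N := by ring
end

section
/- Let τ be a norm on ℝ² with axis and diagonal symmetry. There exists a constant ε₄ > 0 (depending only on τ) such that the following holds. Let 0 < k and m > 0 with k + 2m < N, let x = (x₁, −N−1/2) and y = (y₁, −N−1/2) with x₁ ≤ −k and y₁ ≥ k, and let z = (z₁,z₂) be a point of the closed half-plane {(w₁,w₂) : w₂ ≥ −N−1/2} lying outside the closed triangle with vertices (−(k+2m)−1/2, −N−1/2), ((k+2m)+1/2, −N−1/2) and (0, −(N−k−2m)). Then τ(z−x) + τ(y−z) ≥ 2k·τ(e₁) + ε₄·m. -/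
/-- Lemma 2.5 of the paper: for a norm τ on ℝ² with axis and diagonal
symmetry there is ε₄ > 0 such that for 0 < k, 0 < m, k + 2m < N, points
x = (x₁, −N−1/2), y = (y₁, −N−1/2) with x₁ ≤ −k, y₁ ≥ k, and z in the closed upper
half-plane {w₂ ≥ −N−1/2} but outside the triangle with base
[−(k+2m)−1/2, (k+2m)+1/2] × {−N−1/2} and sides of slope ±1 (apex (0, −(N−k−2m))),
one has τ(z−x) + τ(y−z) ≥ 2k·τ(e₁) + ε₄·m. -/
theorem normprop
    (τ : ℝ × ℝ → ℝ)
    (htri : ∀ a b : ℝ × ℝ, τ (a + b) ≤ τ a + τ b)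
    (hsmul : ∀ (c : ℝ) (a : ℝ × ℝ), τ (c • a) = |c| * τ a)
    (hdef : ∀ a : ℝ × ℝ, τ a = 0 ↔ a = 0)
    (hsym : ∀ a : ℝ × ℝ, τ a = τ (|a.1|, |a.2|) ∧ τ a = τ (|a.2|, |a.1|)) :
    ∃ ε₄ : ℝ, 0 < ε₄ ∧
      ∀ N k m : ℝ, 0 < k → 0 < m → k + 2 * m < N →
        ∀ x y z : ℝ × ℝ,
          x.2 = -N - 1/2 → y.2 = -N - 1/2 → x.1 ≤ -k → k ≤ y.1 →
          -N - 1/2 ≤ z.2 →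
          ¬ (-N - 1/2 ≤ z.2 ∧ z.2 ≤ z.1 + (k + 2 * m) - N ∧
              z.2 ≤ -z.1 + (k + 2 * m) - N) →
          2 * k * τ (1, 0) + ε₄ * m ≤ τ (z - x) + τ (y - z) := by
  have h0 : τ 0 = 0 := (hdef 0).mpr rfl
  have hneg : ∀ a : ℝ × ℝ, τ (-a) = τ a := by
    intro a
    have h := hsmul (-1) a
    simpa using h
  have hnonneg : ∀ a : ℝ × ℝ, 0 ≤ τ a := by
    intro a
    have h1 := htri a (-a)
    rw [add_neg_cancel, h0, hneg] at h1
    linarith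
  set t := τ (1, 0) with htdef
  have ht : 0 < t := by
    rcases lt_or_eq_of_le (hnonneg (1, 0)) with h | h
    · exact h
    · exfalso
      have h2 := (hdef (1, 0)).mp h.symm
      have : (1 : ℝ) = 0 := congrArg Prod.fst h2
      norm_num at this
  -- τ(u,v) ≥ t * |u|
  have key1 : ∀ u v : ℝ, t * |u| ≤ τ (u, v) := by
    intro u v
    have hs : τ ((u, v) : ℝ × ℝ) = τ (|u|, |v|) := (hsym (u, v)).1
    have hx : τ ((|u|, 0) : ℝ × ℝ) = |u| * t := by
      have h := hsmul (|u|) (1, 0)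
      have he : (|u| : ℝ) • ((1, 0) : ℝ × ℝ) = (|u|, 0) := by
        simp [Prod.smul_mk]
      rw [he] at h
      rw [h, abs_abs]
    have h2 : ((|u|, |v|) : ℝ × ℝ) + (|u|, -|v|) = (2 : ℝ) • ((|u|, 0) : ℝ × ℝ) := by
      simp [Prod.smul_mk, Prod.ext_iff]
      ring
    have h3 := htri ((|u|, |v|) : ℝ × ℝ) ((|u|, -|v|) : ℝ × ℝ)
    rw [h2, hsmul] at h3
    have h4 : τ ((|u|, -|v|) : ℝ × ℝ) = τ ((|u|, |v|) : ℝ × ℝ) := by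
      have h5 := (hsym ((|u|, -|v|) : ℝ × ℝ)).1
      simpa [abs_abs, abs_neg] using h5
    rw [h4] at h3
    have h6 : τ ((|u|, 0) : ℝ × ℝ) ≤ τ ((|u|, |v|) : ℝ × ℝ) := by
      have : |(2 : ℝ)| = 2 := by norm_num
      rw [this] at h3
      linarith
    rw [hx] at h6
    rw [hs]
    linarith [h6]
  -- τ(u,v) ≥ t * |v|
  have key2 : ∀ u v : ℝ, t * |v| ≤ τ (u, v) := by
    intro u v
    have hs : τ ((u, v) : ℝ × ℝ) = τ (|v|, |u|) := (hsym (u, v)).2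
    have h1 := key1 (|v|) (|u|)
    rw [abs_abs] at h1
    linarith [hs ▸ h1, hs]
  refine ⟨2 * t, by linarith, ?_⟩
  intro N k m hk hm hkm x y z hx2 hy2 hx1 hy1 hz2 hout
  have hcase : z.1 + (k + 2 * m) - N < z.2 ∨ -z.1 + (k + 2 * m) - N < z.2 := by
    by_contra hc
    push_neg at hc
    exact hout ⟨hz2, hc.1, hc.2⟩
  have hzx : z - x = ((z.1 - x.1, z.2 - x.2) : ℝ × ℝ) := rfl
  have hyz : y - z = ((y.1 - z.1, y.2 - z.2) : ℝ × ℝ) := rfl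
  rcases hcase with hc | hc
  · -- z.2 - z.1 + N > k + 2m : use vertical for z-x, horizontal for y-z
    have b1 : t * |z.2 - x.2| ≤ τ (z - x) := by rw [hzx]; exact key2 _ _
    have b2 : t * |y.1 - z.1| ≤ τ (y - z) := by rw [hyz]; exact key1 _ _
    have e1 : z.2 - x.2 = z.2 + N + 1/2 := by rw [hx2]; ring
    have a1 : t * (z.2 + N + 1/2) ≤ t * |z.2 - x.2| := by
      rw [e1]
      exact mul_le_mul_of_nonneg_left (le_abs_self _) ht.le
    have a2 : t * (k - z.1) ≤ t * |y.1 - z.1| := by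
      have : k - z.1 ≤ y.1 - z.1 := by linarith
      exact mul_le_mul_of_nonneg_left (this.trans (le_abs_self _)) ht.le
    have hsum : z.2 + N + 1/2 + (k - z.1) ≥ 2 * k + 2 * m := by linarith
    nlinarith [mul_le_mul_of_nonneg_left hsum ht.le]
  · -- z.1 + z.2 + N > k + 2m : use horizontal for z-x, vertical for y-z
    have b1 : t * |z.1 - x.1| ≤ τ (z - x) := by rw [hzx]; exact key1 _ _
    have b2 : t * |y.2 - z.2| ≤ τ (y - z) := by rw [hyz]; exact key2 _ _
    have a1 : t * (z.1 + k) ≤ t * |z.1 - x.1| := by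
      have : z.1 + k ≤ z.1 - x.1 := by linarith
      exact mul_le_mul_of_nonneg_left (this.trans (le_abs_self _)) ht.le
    have a2 : t * (z.2 + N + 1/2) ≤ t * |y.2 - z.2| := by
      have : z.2 + N + 1/2 ≤ |y.2 - z.2| := by
        rw [abs_sub_comm, hy2]
        have : z.2 + N + 1/2 ≤ z.2 - (-N - 1/2) := by ring_nf; linarith
        exact this.trans (le_abs_self _)
      exact mul_le_mul_of_nonneg_left this ht.le
    have hsum : z.1 + k + (z.2 + N + 1/2) ≥ 2 * k + 2 * m := by linarith
    nlinarith [mul_le_mul_of_nonneg_left hsum ht.le]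
end

section
/- Let τ be a norm on ℝ² with axis and diagonal symmetry. If x, y, z, u, v ∈ ℝ² satisfy: v lies on the segment from x to z, u is the reflection of z across a line of symmetry of τ through y parallel to the diagonal (so τ(y−z)=τ(y−u)), and componentwise x ≤ u ≤ v (meaning x₁ ≤ u₁ ≤ v₁ and x₂ ≤ u₂ ≤ v₂), then τ(z−x) + τ(y−z) ≥ τ(z−v) + τ(u−x) + τ(y−u). -/
/-- Monotonicity in the first coordinate. -/
lemma tau_mono1
    (τ : ℝ × ℝ → ℝ)
    (htri : ∀ a b : ℝ × ℝ, τ (a + b) ≤ τ a + τ b)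
    (hsmul : ∀ (c : ℝ) (a : ℝ × ℝ), τ (c • a) = |c| * τ a)
    (hsym : ∀ a : ℝ × ℝ, τ a = τ (|a.1|, |a.2|) ∧ τ a = τ (|a.2|, |a.1|))
    (a b c : ℝ) (ha : 0 ≤ a) (hab : a ≤ b) : τ (a, c) ≤ τ (b, c) := by
  rcases eq_or_lt_of_le (ha.trans hab) with hb | hb
  · have : a = 0 := le_antisymm (hab.trans_eq hb.symm) ha
    rw [this, ← hb]
  · set t : ℝ := (b + a) / (2 * b) with ht
    have ht0 : 0 ≤ t := by positivity
    have ht1 : t ≤ 1 := by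
      rw [div_le_one (by positivity)]; linarith
    have key : (a, c) = t • (b, c) + (1 - t) • (-b, c) := by
      have hb' : (2 : ℝ) * b ≠ 0 := by positivity
      ext <;> simp [Prod.smul_def, ht] <;> field_simp <;> ring
    have hneg : τ (-b, c) = τ (b, c) := by
      rw [(hsym (-b, c)).1, (hsym (b, c)).1]
      simp
    calc τ (a, c) ≤ τ (t • (b, c)) + τ ((1 - t) • (-b, c)) := by
          rw [key] at *; exact htri _ _
      _ = t * τ (b, c) + (1 - t) * τ (b, c) := by
          rw [hsmul, hsmul, hneg, abs_of_nonneg ht0, abs_of_nonneg (by linarith)]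
      _ = τ (b, c) := by ring

/-- Componentwise monotonicity on the nonnegative quadrant. -/
lemma tau_mono
    (τ : ℝ × ℝ → ℝ)
    (htri : ∀ a b : ℝ × ℝ, τ (a + b) ≤ τ a + τ b)
    (hsmul : ∀ (c : ℝ) (a : ℝ × ℝ), τ (c • a) = |c| * τ a)
    (hsym : ∀ a : ℝ × ℝ, τ a = τ (|a.1|, |a.2|) ∧ τ a = τ (|a.2|, |a.1|))
    (p q : ℝ × ℝ) (h1 : 0 ≤ p.1) (h2 : p.1 ≤ q.1) (h3 : 0 ≤ p.2) (h4 : p.2 ≤ q.2) :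
    τ p ≤ τ q := by
  have step1 : τ (p.1, p.2) ≤ τ (q.1, p.2) :=
    tau_mono1 τ htri hsmul hsym p.1 q.1 p.2 h1 h2
  have swap1 : τ (q.1, p.2) = τ (p.2, q.1) := by
    rw [(hsym (q.1, p.2)).2, (hsym (p.2, q.1)).1]
  have step2 : τ (p.2, q.1) ≤ τ (q.2, q.1) :=
    tau_mono1 τ htri hsmul hsym p.2 q.2 q.1 h3 h4
  have swap2 : τ (q.2, q.1) = τ (q.1, q.2) := by
    rw [(hsym (q.2, q.1)).2, (hsym (q.1, q.2)).1]
  calc τ p = τ (p.1, p.2) := by rfl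
    _ ≤ τ (q.1, p.2) := step1
    _ = τ (p.2, q.1) := swap1
    _ ≤ τ (q.2, q.1) := step2
    _ = τ (q.1, q.2) := swap2
    _ = τ q := by rfl

/-- for a norm τ on ℝ² with axis and diagonal symmetry, if v lies on the
segment from x to z, τ(y−z) = τ(y−u) (u a reflection of z across a diagonal symmetry
line of τ through y), and x ≤ u ≤ v componentwise, then
τ(z−x) + τ(y−z) ≥ τ(z−v) + τ(u−x) + τ(y−u). -/
theorem reflection_step
    (τ : ℝ × ℝ → ℝ)
    (htri : ∀ a b : ℝ × ℝ, τ (a + b) ≤ τ a + τ b)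
    (hsmul : ∀ (c : ℝ) (a : ℝ × ℝ), τ (c • a) = |c| * τ a)
    (hdef : ∀ a : ℝ × ℝ, τ a = 0 ↔ a = 0)
    (hsym : ∀ a : ℝ × ℝ, τ a = τ (|a.1|, |a.2|) ∧ τ a = τ (|a.2|, |a.1|))
    (x y z u v : ℝ × ℝ)
    (hseg : ∃ t : ℝ, t ∈ Set.Icc (0 : ℝ) 1 ∧ v = x + t • (z - x))
    (hrefl : τ (y - z) = τ (y - u))
    (h1 : x.1 ≤ u.1) (h2 : u.1 ≤ v.1) (h3 : x.2 ≤ u.2) (h4 : u.2 ≤ v.2) :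
    τ (z - v) + τ (u - x) + τ (y - u) ≤ τ (z - x) + τ (y - z) := by
  obtain ⟨t, ⟨ht0, ht1⟩, hv⟩ := hseg
  have hzv : z - v = (1 - t) • (z - x) := by
    rw [hv]; module
  have hvx : v - x = t • (z - x) := by
    rw [hv]; module
  have hadd : τ (z - v) + τ (v - x) = τ (z - x) := by
    rw [hzv, hvx, hsmul, hsmul, abs_of_nonneg ht0, abs_of_nonneg (by linarith)]
    ring
  have hmono : τ (u - x) ≤ τ (v - x) := by
    apply tau_mono τ htri hsmul hsym
    · simpa using h1
    · simpa using sub_le_sub_right h2 x.1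
    · simpa using h3
    · simpa using sub_le_sub_right h4 x.2
  linarith [hrefl, hadd, hmono]
end
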